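/- In a finite directed graph with edge costs in (0,∞)^M and M ≥ 1, for any fixed vector g* ∈ ℝ^M, the set of paths π from a fixed start vertex with cost(π) not ≥ g* componentwise is finite, where cost is the componentwise sum of edge costs along the path. -/

import Mathlib

/-!
Every edge cost is at least some `ε > 0` in each component (finitely many edges), so a path
with `k` edges costs at least `k • ε` in every component. A path whose cost is below `g*` in
component `m` therefore has fewer than `g* m / ε + 1` edges, and over a finite vertex set
there are only finitely many lists of bounded length.
-/

/-- Cost of a path (list of vertices): componentwise sum of edge costs along it. -/
def pathCost {V : Type*} {M : ℕ} (c : V → V → Fin M → ℝ) : List V → (Fin M → ℝ)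
  | [] => 0
  | [_] => 0
  | u :: v :: rest => c u v + pathCost c (v :: rest)

lemma exists_pos_forall_le_of_finite {ι : Type*} [Finite ι] {p : ι → Prop} {f : ι → ℝ}
    (hf : ∀ i, p i → 0 < f i) : ∃ ε > 0, ∀ i, p i → ε ≤ f i := by
  by_cases hp : ∃ i, p i
  · obtain ⟨i, hi, hmin⟩ := Set.exists_min_image {i | p i} f (Set.toFinite _) hp
    exact ⟨f i, hf i hi, hmin⟩
  · push Not at hp
    exact ⟨1, one_pos, fun i hi => absurd hi (hp i)⟩

section PathCost

variable {V : Type*} {M : ℕ} {E : V → V → Prop} {c : V → V → Fin M → ℝ} {ε : ℝ} {m : Fin M}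

lemma length_sub_one_mul_le_pathCost (hε : ∀ u v, E u v → ε ≤ c u v m) :
    ∀ l : List V, l.IsChain E → ((l.length - 1 : ℕ) : ℝ) * ε ≤ pathCost c l m
  | [], _ => by simp [pathCost]
  | [_], _ => by simp [pathCost]
  | u :: v :: rest, hl => by
    have hrest := length_sub_one_mul_le_pathCost hε (v :: rest) hl.tail
    have huv := hε u v hl.rel
    simp only [List.length_cons, Nat.add_sub_cancel, Nat.cast_add, Nat.cast_one,
      pathCost, Pi.add_apply] at hrest ⊢
    linarith

lemma finite_setOf_chain_pathCost_lt [Finite V] (hε₀ : 0 < ε)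
    (hε : ∀ u v, E u v → ε ≤ c u v m) (G : ℝ) :
    {l : List V | l.IsChain E ∧ pathCost c l m < G}.Finite := by
  obtain ⟨N, hN⟩ := exists_nat_ge (G / ε)
  refine (List.finite_length_le V (N + 1)).subset fun l ⟨hl, hlt⟩ => ?_
  by_contra hlong
  have hN' : (N : ℝ) ≤ ((l.length - 1 : ℕ) : ℝ) := by
    simp only [Set.mem_ofPred_eq, not_le] at hlong
    exact_mod_cast (by omega : N ≤ l.length - 1)
  refine hlt.not_ge ?_
  calc G ≤ N * ε := (div_le_iff₀ hε₀).1 hN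
    _ ≤ ((l.length - 1 : ℕ) : ℝ) * ε := by gcongr
    _ ≤ pathCost c l m := length_sub_one_mul_le_pathCost hε l hl

end PathCost

theorem finite_paths_not_ge_general {V : Type*} [Fintype V] {M : ℕ}
    (E : V → V → Prop) (c : V → V → Fin M → ℝ)
    (hc : ∀ u v, E u v → ∀ m, 0 < c u v m) (s : V) (gstar : Fin M → ℝ) :
    {l : List V | l.head? = some s ∧ l.Chain' E ∧
      ¬ (∀ m, gstar m ≤ pathCost c l m)}.Finite := by
  have hfin : ∀ m, {l : List V | l.IsChain E ∧ pathCost c l m < gstar m}.Finite := fun m => by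
    obtain ⟨ε, hε₀, hε⟩ := exists_pos_forall_le_of_finite (p := fun e : V × V => E e.1 e.2)
      (fun e he => hc e.1 e.2 he m)
    exact finite_setOf_chain_pathCost_lt hε₀ (fun u v huv => hε (u, v) huv) (gstar m)
  refine (Set.finite_iUnion hfin).subset fun l ⟨_, hl, hnot⟩ => ?_
  push Not at hnot
  obtain ⟨m, hm⟩ := hnot
  exact Set.mem_iUnion.2 ⟨m, hl, hm⟩

theorem finite_paths_not_ge {V : Type*} [Fintype V] {M : ℕ} (hM : 1 ≤ M)
    (E : V → V → Prop) (c : V → V → Fin M → ℝ)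
    (hc : ∀ u v, E u v → ∀ m, 0 < c u v m) (s : V) (gstar : Fin M → ℝ) :
    {l : List V | l.head? = some s ∧ l.Chain' E ∧
      ¬ (∀ m, gstar m ≤ pathCost c l m)}.Finite :=
  finite_paths_not_ge_general E c hc s gstar
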